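/- For any real k and complex ν with ν+1 not a nonpositive integer, the function x ↦ 2^{−ν}/Γ(ν+1)·₀F₁(;ν+1;−k²x²/4) on [−1,1] has the Chebyshev expansion Σ_{L=0}^∞ C_L T_{2L}(x), converging for −1 ≤ x ≤ 1, with coefficients C_L = (−1)^L k^{2L} 2^{−4L−ν} (2−δ_{L0}) / (L! Γ(L+ν+1)) · ₁F₂(L+1/2; L+ν+1, 2L+1; −k²/4), where T_n is the Chebyshev polynomial of the first kind. -/

import Mathlib

open Complex MeasureTheory Filter Topology

noncomputable def poch (x : ℂ) (n : ℕ) : ℂ := (ascPochhammer ℂ n).eval x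

/-- Generalized hypergeometric series. -/
noncomputable def pFq (a b : List ℂ) (z : ℂ) : ℂ :=
  ∑' n : ℕ, ((a.map (fun ai => poch ai n)).prod / (b.map (fun bj => poch bj n)).prod)
    * z ^ n / (n.factorial : ℂ)

/-- Regularized generalized hypergeometric series. -/
noncomputable def pFqReg (a b : List ℂ) (z : ℂ) : ℂ :=
  ∑' n : ℕ, ((a.map (fun ai => poch ai n)).prod /
      (b.map (fun bj => Complex.Gamma (bj + n))).prod) * z ^ n / (n.factorial : ℂ)

/-- Bessel function of the first kind. -/
noncomputable def besselJ (ν z : ℂ) : ℂ :=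
  (z / 2) ^ ν / Complex.Gamma (ν + 1) * pFq [] [ν + 1] (-z ^ 2 / 4)

/-- Generalized Pochhammer symbol `(x)_a = Γ(x+a)/Γ(x)`. -/
noncomputable def pochC (x a : ℂ) : ℂ := Complex.Gamma (x + a) / Complex.Gamma x

/-- `z` is not a nonpositive integer. -/
def notNonposInt (z : ℂ) : Prop := ∀ m : ℕ, z ≠ -(m : ℂ)

/-! ### Auxiliary lemmas -/

lemma poch_zero' (x : ℂ) : poch x 0 = 1 := by simp [poch]

lemma poch_succ (x : ℂ) (n : ℕ) : poch x (n+1) = poch x n * (x + n) := by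
  simp [poch, ascPochhammer_succ_eval]

lemma poch_ne_zero {x : ℂ} (h : ∀ j : ℕ, x + j ≠ 0) (n : ℕ) : poch x n ≠ 0 := by
  induction n with
  | zero => simp [poch_zero']
  | succ n ih => rw [poch_succ]; exact mul_ne_zero ih (h n)

lemma poch_add (x : ℂ) (a b : ℕ) : poch x (a + b) = poch x a * poch (x + a) b := by
  have := ascPochhammer_mul ℂ a b
  have h2 := congrArg (Polynomial.eval x) this
  simpa [poch, Polynomial.eval_comp] using h2.symm

lemma poch_factorial (a : ℕ) : ∀ m : ℕ,
    ((a + m).factorial : ℂ) = (a.factorial : ℂ) * poch ((a : ℂ) + 1) m := by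
  intro m
  induction m with
  | zero => simp [poch_zero']
  | succ m ih =>
      rw [show a + (m+1) = (a+m)+1 by ring, Nat.factorial_succ, poch_succ]
      push_cast
      rw [ih]; ring

lemma poch_gamma {x : ℂ} (h : ∀ j : ℕ, x + j ≠ 0) (n : ℕ) :
    Complex.Gamma (x + n) = Complex.Gamma x * poch x n := by
  induction n with
  | zero => simp [poch_zero']
  | succ n ih =>
      rw [show x + (n+1 : ℕ) = (x + n) + 1 by push_cast; ring,
        Complex.Gamma_add_one _ (h n), ih, poch_succ]
      ring

lemma double_factorial (L : ℕ) : ∀ m : ℕ, ((2*L + 2*m).factorial : ℂ) =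
    ((2*L).factorial : ℂ) * 4^m * poch ((L:ℂ) + 1/2) m * poch ((L:ℂ) + 1) m := by
  intro m
  induction m with
  | zero => simp [poch_zero']
  | succ m ih =>
      rw [show 2*L + 2*(m+1) = (2*L+2*m) + 1 + 1 by ring, Nat.factorial_succ, Nat.factorial_succ,
        poch_succ, poch_succ]
      push_cast
      rw [ih]; ring

set_option maxHeartbeats 1000000 in
lemma term_id (ν : ℂ) (hν : ∀ j : ℕ, ν + 1 + j ≠ 0) (k : ℝ) (L m : ℕ) :
    (1 / Complex.Gamma (ν+1)) * (1 / poch (ν+1) (L+m) * (-(k:ℂ)^2/4)^(L+m)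
        / ((L+m).factorial : ℂ)) / 4^(L+m) * (((2*(L+m)).choose m : ℕ) : ℂ)
    = (-1:ℂ)^L * (k:ℂ)^(2*L) / 2^(4*L) / ((L.factorial : ℂ) * Complex.Gamma ((L:ℂ)+ν+1))
      * (poch ((L:ℂ)+1/2) m / (poch ((L:ℂ)+ν+1) m * poch (2*(L:ℂ)+1) m) * (-(k:ℂ)^2/4)^m
        / (m.factorial : ℂ)) := by
  have hG : Complex.Gamma ((L:ℂ)+ν+1) = Complex.Gamma (ν+1) * poch (ν+1) L := by
    rw [← poch_gamma hν L]
    congr 1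
    ring
  have hpA : poch (ν+1) (L+m) = poch (ν+1) L * poch ((L:ℂ)+ν+1) m := by
    rw [poch_add, show (ν+1+(L:ℕ) : ℂ) = (L:ℂ)+ν+1 by push_cast; ring]
  have hf1 : ((L+m).factorial : ℂ) = (L.factorial : ℂ) * poch ((L:ℂ)+1) m := poch_factorial L m
  have hch : (((2*(L+m)).choose m : ℕ) : ℂ)
      = ((2*L+2*m).factorial : ℂ) / ((m.factorial : ℂ) * ((2*L+m).factorial : ℂ)) := by
    rw [show 2*(L+m) = 2*L+2*m by ring, Nat.cast_choose ℂ (by omega : m ≤ 2*L+2*m),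
      show 2*L+2*m - m = 2*L+m by omega]
  have hf2 : ((2*L+2*m).factorial : ℂ)
      = ((2*L).factorial : ℂ) * 4^m * poch ((L:ℂ)+1/2) m * poch ((L:ℂ)+1) m :=
    double_factorial L m
  have hf3 : ((2*L+m).factorial : ℂ) = ((2*L).factorial : ℂ) * poch (2*(L:ℂ)+1) m := by
    rw [poch_factorial (2*L) m]
    push_cast
    ring_nf
  have hz : (-(k:ℂ)^2/4)^(L+m) = ((-1:ℂ)^L * (k:ℂ)^(2*L) / 4^L) * (-(k:ℂ)^2/4)^m := by
    rw [pow_add]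
    congr 1
    rw [div_pow, neg_pow, ← pow_mul]
  have hΓ1 : Complex.Gamma (ν+1) ≠ 0 := by
    apply Complex.Gamma_ne_zero
    intro j hc
    exact hν j (by rw [hc]; ring)
  have hA : poch (ν+1) L ≠ 0 := poch_ne_zero hν L
  have hP : poch ((L:ℂ)+ν+1) m ≠ 0 := by
    apply poch_ne_zero
    intro j hc
    apply hν (L+j)
    push_cast
    linear_combination hc
  have posne : ∀ c : ℝ, 0 < c → ∀ m' : ℕ, poch (c : ℂ) m' ≠ 0 := by
    intro c hc m'
    apply poch_ne_zero
    intro j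
    have h1 : (0:ℝ) < c + j := by positivity
    have : ((c + (j:ℝ) : ℝ) : ℂ) = (c:ℂ) + j := by push_cast; ring
    rw [← this]
    exact_mod_cast ne_of_gt h1
  have hQ : poch ((L:ℂ)+1/2) m ≠ 0 := by
    have := posne ((L:ℝ)+1/2) (by positivity) m
    rwa [show (((L:ℝ)+1/2 : ℝ) : ℂ) = (L:ℂ)+1/2 by push_cast; ring] at this
  have hR : poch ((L:ℂ)+1) m ≠ 0 := by
    have := posne ((L:ℝ)+1) (by positivity) m
    rwa [show (((L:ℝ)+1 : ℝ) : ℂ) = (L:ℂ)+1 by push_cast; ring] at this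
  have hS : poch (2*(L:ℂ)+1) m ≠ 0 := by
    have := posne (2*(L:ℝ)+1) (by positivity) m
    rwa [show ((2*(L:ℝ)+1 : ℝ) : ℂ) = 2*(L:ℂ)+1 by push_cast; ring] at this
  have hfL : (L.factorial : ℂ) ≠ 0 := Nat.cast_ne_zero.mpr (Nat.factorial_ne_zero _)
  have hfm : (m.factorial : ℂ) ≠ 0 := Nat.cast_ne_zero.mpr (Nat.factorial_ne_zero _)
  have hf2L : ((2*L).factorial : ℂ) ≠ 0 := Nat.cast_ne_zero.mpr (Nat.factorial_ne_zero _)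
  have h4 : (4 : ℂ) ≠ 0 := by norm_num
  have h2 : (2 : ℂ) ≠ 0 := by norm_num
  rw [hpA, hf1, hch, hf2, hf3, hz, hG, pow_add]
  have h24 : (2:ℂ)^(4*L) = 4^L * 4^L := by
    rw [show 4*L = 2*L + 2*L by ring, pow_add]
    congr 1 <;> · rw [pow_mul]; norm_num
  rw [h24]
  field_simp [hΓ1, hA, hP, hQ, hR, hS, hfL, hfm, hf2L]

lemma cheb_sum (n : ℕ) (θ : ℝ) :
    ∑ L ∈ Finset.range (n+1), ((2 - if L = 0 then 1 else 0 : ℂ) * (((2*n).choose (n-L) : ℕ) : ℂ)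
      * Complex.cos (2*L*θ)) = (2 * Complex.cos (θ:ℂ))^(2*n) := by
  set h : ℕ → ℂ := fun j => (((2*n).choose j : ℕ) : ℂ) * Complex.exp ((2*(j:ℂ) - 2*n) * (θ*I))
    with hh
  have key : ∑ j ∈ Finset.range (2*n+1), h j = (2 * Complex.cos (θ:ℂ))^(2*n) := by
    have hc : (2 : ℂ) * Complex.cos (θ:ℂ) = Complex.exp ((θ:ℂ)*I) + Complex.exp (-(θ:ℂ)*I) :=
      Complex.two_cos _
    rw [hc, add_pow]
    apply Finset.sum_congr rfl
    intro j hj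
    rw [Finset.mem_range] at hj
    have hj' : j ≤ 2*n := by omega
    rw [← Complex.exp_nat_mul, ← Complex.exp_nat_mul, ← Complex.exp_add]
    rw [hh]
    simp only
    rw [mul_comm]
    congr 1
    congr 1
    push_cast [hj']
    ring
  have split1 : ∑ j ∈ Finset.range (2*n+1), h j
      = (∑ j ∈ Finset.range (n+1), h j) + ∑ j ∈ Finset.range n, h ((n+1) + j) := by
    rw [show 2*n+1 = (n+1) + n by ring, Finset.sum_range_add]
  have refl1 : ∑ j ∈ Finset.range (n+1), h j = ∑ L ∈ Finset.range (n+1), h (n - L) := by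
    rw [← Finset.sum_range_reflect]
    apply Finset.sum_congr rfl
    intro j hj
    congr 1
  have refl2 : ∑ j ∈ Finset.range n, h ((n+1) + j)
      = (∑ L ∈ Finset.range (n+1), h (n + L)) - h n := by
    rw [Finset.sum_range_succ' (fun L => h (n + L)) n]
    simp only [add_zero]
    rw [eq_sub_iff_add_eq]
    congr 1
    apply Finset.sum_congr rfl
    intro j hj
    congr 1
    omega
  have pair : ∀ L ∈ Finset.range (n+1),
      h (n - L) + h (n + L) = 2 * (((2*n).choose (n-L) : ℕ) : ℂ) * Complex.cos (2*L*θ) := by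
    intro L hL
    rw [Finset.mem_range] at hL
    have hL' : L ≤ n := by omega
    have hsym : (2*n).choose (n+L) = (2*n).choose (n-L) := by
      rw [← Nat.choose_symm (by omega : n + L ≤ 2*n)]
      congr 1
      omega
    have hcos : Complex.cos (2*L*θ) =
        (Complex.exp ((2*(L:ℂ)*θ) * I) + Complex.exp (-((2*(L:ℂ)*θ) * I))) / 2 := by
      have := Complex.two_cos (2*(L:ℂ)*θ)
      rw [neg_mul] at this
      linear_combination this/2
    rw [hh]
    simp only
    rw [hsym]
    have e1 : (2*((n:ℂ) - L) - 2*n) * (θ*I) = -((2*(L:ℂ)*θ) * I) := by ring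
    have e2 : (2*((n:ℂ) + L) - 2*n) * (θ*I) = (2*(L:ℂ)*θ) * I := by ring
    have ecast : ((n - L : ℕ) : ℂ) = (n : ℂ) - L := by
      push_cast [hL']; ring
    rw [ecast, e1]
    push_cast
    rw [e2, hcos]
    ring
  have hsum2 : ∑ L ∈ Finset.range (n+1), (h (n - L) + h (n + L))
      = ∑ L ∈ Finset.range (n+1), 2 * (((2*n).choose (n-L) : ℕ) : ℂ) * Complex.cos (2*L*θ) :=
    Finset.sum_congr rfl pair
  have hn0 : h n = (((2*n).choose n : ℕ) : ℂ) := by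
    rw [hh]
    simp only
    have : (2*(n:ℂ) - 2*n) * (θ*I) = 0 := by ring
    rw [this, Complex.exp_zero, mul_one]
  have split2 : ∑ L ∈ Finset.range (n+1), ((2 - if L = 0 then 1 else 0 : ℂ)
        * (((2*n).choose (n-L) : ℕ) : ℂ) * Complex.cos (2*L*θ))
      = (∑ L ∈ Finset.range (n+1), 2 * (((2*n).choose (n-L) : ℕ) : ℂ) * Complex.cos (2*L*θ))
        - ∑ L ∈ Finset.range (n+1), (if L = 0 then (((2*n).choose (n-L) : ℕ) : ℂ)
            * Complex.cos (2*L*θ) else 0) := by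
    rw [← Finset.sum_sub_distrib]
    apply Finset.sum_congr rfl
    intro L _
    split_ifs <;> ring
  have ite0 : ∑ L ∈ Finset.range (n+1), (if L = 0 then (((2*n).choose (n-L) : ℕ) : ℂ)
      * Complex.cos (2*L*θ) else 0) = (((2*n).choose n : ℕ) : ℂ) := by
    rw [Finset.sum_ite_eq' (Finset.range (n+1)) 0]
    simp
  rw [split2, ite0, ← hsum2, ← key, split1, refl1, refl2, Finset.sum_add_distrib, hn0]
  ring

lemma norm_add_nat_tendsto (w : ℂ) : Tendsto (fun n : ℕ => ‖w + n‖) atTop atTop := by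
  have h1 : Tendsto (fun n : ℕ => (n : ℝ) - ‖w‖) atTop atTop :=
    tendsto_atTop_add_const_right _ _ tendsto_natCast_atTop_atTop
  apply tendsto_atTop_mono (fun n : ℕ => ?_) h1
  calc (n : ℝ) - ‖w‖ = ‖(n : ℂ)‖ - ‖-w‖ := by simp [Complex.norm_natCast]
  _ ≤ ‖(n:ℂ) - -w‖ := norm_sub_norm_le _ _
  _ = ‖w + n‖ := by ring_nf

lemma inv_add_nat_tendsto (w : ℂ) : Tendsto (fun n : ℕ => (w + n)⁻¹) atTop (𝓝 0) := by
  rw [tendsto_zero_iff_norm_tendsto_zero]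
  simpa [Function.comp_def] using (tendsto_inv_atTop_zero.comp (norm_add_nat_tendsto w))

lemma summable_of_ratio_zero {f g : ℕ → ℂ} (hg : Tendsto g atTop (𝓝 0))
    (hf : ∀ n, f (n+1) = g n * f n) : Summable (fun n => ‖f n‖) := by
  apply summable_of_ratio_norm_eventually_le (r := 1/2) (by norm_num)
  have h0 : Tendsto (fun n => ‖g n‖) atTop (𝓝 0) := by
    have := hg.norm; simpa using this
  filter_upwards [h0.eventually (gt_mem_nhds (by norm_num : (0:ℝ) < 1/2))] with n hn
  simp only [norm_norm]
  rw [hf, norm_mul]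
  exact mul_le_mul_of_nonneg_right hn.le (norm_nonneg _)

noncomputable def bb (ν : ℂ) (k : ℝ) (n : ℕ) : ℂ :=
  1 / poch (ν+1) n * (-(k:ℂ)^2/4)^n / (n.factorial : ℂ)

noncomputable def tt (ν : ℂ) (k : ℝ) (L m : ℕ) : ℂ :=
  poch ((L:ℂ)+1/2) m / (poch ((L:ℂ)+ν+1) m * poch (2*(L:ℂ)+1) m) * (-(k:ℂ)^2/4)^m
    / (m.factorial : ℂ)

lemma bb_norm_summable (ν : ℂ) (k : ℝ) (hν' : ∀ j : ℕ, ν + 1 + (j:ℂ) ≠ 0) :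
    Summable (fun n => ‖bb ν k n‖) := by
  apply summable_of_ratio_zero (g := fun n : ℕ => (-(k:ℂ)^2/4) * (ν+1+n)⁻¹ * ((1:ℂ)+n)⁻¹)
  · have := (tendsto_const_nhds (x := -(k:ℂ)^2/4) (f := atTop (α := ℕ))).mul
      ((inv_add_nat_tendsto (ν+1)).mul (inv_add_nat_tendsto 1))
    simp only [mul_zero] at this
    convert this using 2 with n
    · ring
  · intro n
    have hp := poch_ne_zero hν' n
    have hp2 : (ν+1+(n:ℂ)) ≠ 0 := hν' n
    have hn1 : ((1:ℂ)+(n:ℂ)) ≠ 0 := by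
      have : ((1+n : ℕ) : ℂ) ≠ 0 := Nat.cast_ne_zero.mpr (by omega)
      push_cast at this
      exact this
    have hfn : ((n.factorial : ℕ) : ℂ) ≠ 0 := Nat.cast_ne_zero.mpr (Nat.factorial_ne_zero _)
    simp only [bb, poch_succ, Nat.factorial_succ, pow_succ]
    push_cast
    simp only [one_div, div_eq_mul_inv, mul_inv]
    ring

lemma tt_norm_summable (ν : ℂ) (k : ℝ) (L : ℕ) (hν' : ∀ j : ℕ, ν + 1 + (j:ℂ) ≠ 0) :
    Summable (fun m => ‖tt ν k L m‖) := by
  apply summable_of_ratio_zero (g := fun m : ℕ =>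
    ((L:ℂ)+1/2+m) * ((1:ℂ)+m)⁻¹ * (-(k:ℂ)^2/4) * ((L:ℂ)+ν+1+m)⁻¹ * (2*(L:ℂ)+1+m)⁻¹)
  · have h1 := (((tendsto_const_nhds (x := (1:ℂ)) (f := atTop (α := ℕ))).add
        ((tendsto_const_nhds (x := (L:ℂ)-1/2)).mul (inv_add_nat_tendsto 1))).mul
        (tendsto_const_nhds (x := -(k:ℂ)^2/4))).mul
      ((inv_add_nat_tendsto ((L:ℂ)+ν+1)).mul (inv_add_nat_tendsto (2*(L:ℂ)+1)))
    simp only [mul_zero, zero_mul] at h1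
    apply h1.congr
    intro m
    have hn1 : ((1:ℂ)+(m:ℂ)) ≠ 0 := by
      have : ((1+m : ℕ) : ℂ) ≠ 0 := Nat.cast_ne_zero.mpr (by omega)
      push_cast at this
      exact this
    have e1 : (1 + ((L:ℂ)-1/2) * ((1:ℂ)+m)⁻¹) = ((L:ℂ)+1/2+m) * ((1:ℂ)+m)⁻¹ := by
      field_simp
      ring
    rw [← e1]
    ring
  · intro m
    have hP : poch ((L:ℂ)+ν+1) m ≠ 0 := by
      apply poch_ne_zero
      intro j hc
      apply hν' (L+j)
      push_cast
      linear_combination hc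
    have posne : ∀ c : ℝ, 0 < c → (∀ m' : ℕ, poch (c : ℂ) m' ≠ 0) ∧ ∀ j : ℕ, (c:ℂ) + j ≠ 0 := by
      intro c hc
      have h2 : ∀ j : ℕ, (c:ℂ) + j ≠ 0 := by
        intro j
        have h1 : (0:ℝ) < c + j := by positivity
        have : ((c + (j:ℝ) : ℝ) : ℂ) = (c:ℂ) + j := by push_cast; ring
        rw [← this]
        exact_mod_cast ne_of_gt h1
      exact ⟨poch_ne_zero h2, h2⟩
    have hQ : poch ((L:ℂ)+1/2) m ≠ 0 := by
      have := (posne ((L:ℝ)+1/2) (by positivity)).1 m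
      rwa [show (((L:ℝ)+1/2 : ℝ) : ℂ) = (L:ℂ)+1/2 by push_cast; ring] at this
    have hS : poch (2*(L:ℂ)+1) m ≠ 0 := by
      have := (posne (2*(L:ℝ)+1) (by positivity)).1 m
      rwa [show ((2*(L:ℝ)+1 : ℝ) : ℂ) = 2*(L:ℂ)+1 by push_cast; ring] at this
    have hP2 : ((L:ℂ)+ν+1+m) ≠ 0 := by
      intro hc; apply hν' (L+m); push_cast; linear_combination hc
    have hS2 : (2*(L:ℂ)+1+m) ≠ 0 := by
      have := (posne (2*(L:ℝ)+1) (by positivity)).2 m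
      rwa [show ((2*(L:ℝ)+1 : ℝ) : ℂ) = 2*(L:ℂ)+1 by push_cast; ring] at this
    have hn1 : ((1:ℂ)+(m:ℂ)) ≠ 0 := by
      have : ((1+m : ℕ) : ℂ) ≠ 0 := Nat.cast_ne_zero.mpr (by omega)
      push_cast at this
      exact this
    have hfm : ((m.factorial : ℕ) : ℂ) ≠ 0 := Nat.cast_ne_zero.mpr (Nat.factorial_ne_zero _)
    simp only [tt, poch_succ, Nat.factorial_succ, pow_succ]
    push_cast
    simp only [one_div, div_eq_mul_inv, mul_inv]
    ring

noncomputable def GG (ν : ℂ) (k : ℝ) (x : ℝ) (p : ℕ × ℕ) : ℂ :=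
  if p.2 ≤ p.1 then
    ((2:ℂ)^(-ν) / Complex.Gamma (ν+1)) * bb ν k p.1 / 4^p.1 *
      ((2 - if p.2 = 0 then 1 else 0 : ℂ) * (((2*p.1).choose (p.1 - p.2) : ℕ) : ℂ) *
        (((Polynomial.Chebyshev.T ℝ (2*(p.2:ℤ))).eval x : ℝ) : ℂ))
  else 0

theorem stmt14 (k : ℝ) (ν : ℂ) (hν : notNonposInt (ν + 1)) (x : ℝ)
    (hx : x ∈ Set.Icc (-1 : ℝ) 1) :
    HasSum (fun L : ℕ =>
        ((-1 : ℂ) ^ L * (k : ℂ) ^ (2 * L) * (2 : ℂ) ^ (-(4 : ℂ) * L - ν) *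
            (2 - if L = 0 then 1 else 0 : ℂ) /
            ((L.factorial : ℂ) * Complex.Gamma ((L : ℂ) + ν + 1)) *
          pFq [(L : ℂ) + 1 / 2] [(L : ℂ) + ν + 1, 2 * (L : ℂ) + 1] (-(k : ℂ) ^ 2 / 4)) *
        (((Polynomial.Chebyshev.T ℝ (2 * L)).eval x : ℝ) : ℂ))
      ((2 : ℂ) ^ (-ν) / Complex.Gamma (ν + 1) *
        pFq [] [ν + 1] (-(k : ℂ) ^ 2 * (x : ℂ) ^ 2 / 4)) := by
  obtain ⟨hx1, hx2⟩ := hx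
  have hν' : ∀ j : ℕ, ν + 1 + (j:ℂ) ≠ 0 := fun j hc => hν j (by linear_combination hc)
  have hΓ : Complex.Gamma (ν+1) ≠ 0 := Complex.Gamma_ne_zero hν
  set θ : ℝ := Real.arccos x with hθdef
  have hxc : Real.cos θ = x := Real.cos_arccos hx1 hx2
  have hTT : ∀ L : ℕ, (((Polynomial.Chebyshev.T ℝ (2*(L:ℤ))).eval x : ℝ) : ℂ)
      = Complex.cos (2*(L:ℂ)*(θ:ℂ)) := by
    intro L
    rw [← hxc, Polynomial.Chebyshev.T_real_cos θ (2*(L:ℤ)), Complex.ofReal_cos]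
    congr 1
    push_cast
    ring
  have hTTle : ∀ L : ℕ, ‖(((Polynomial.Chebyshev.T ℝ (2*(L:ℤ))).eval x : ℝ) : ℂ)‖ ≤ 1 := by
    intro L
    rw [Complex.norm_real, Real.norm_eq_abs, ← hxc, Polynomial.Chebyshev.T_real_cos]
    exact Real.abs_cos_le_one _
  -- fiberwise over n
  have hfibn : ∀ n : ℕ, HasSum (fun L => GG ν k x (n, L))
      ((2:ℂ)^(-ν) / Complex.Gamma (ν+1) * bb ν k n * (x:ℂ)^(2*n)) := by
    intro n
    have h0 : ∀ L ∉ Finset.range (n+1), GG ν k x (n, L) = 0 := by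
      intro L hL
      rw [Finset.mem_range] at hL
      simp only [GG]
      rw [if_neg (by omega)]
    have h1 : HasSum (fun L => GG ν k x (n, L)) _ := hasSum_sum_of_ne_finset_zero h0
    have h2 : ∑ L ∈ Finset.range (n+1), GG ν k x (n, L)
        = (2:ℂ)^(-ν) / Complex.Gamma (ν+1) * bb ν k n * (x:ℂ)^(2*n) := by
      have e1 : ∀ L ∈ Finset.range (n+1), GG ν k x (n, L)
          = ((2:ℂ)^(-ν) / Complex.Gamma (ν+1)) * bb ν k n / 4^n *
            ((2 - if L = 0 then 1 else 0 : ℂ) * (((2*n).choose (n-L) : ℕ) : ℂ)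
              * Complex.cos (2*(L:ℂ)*(θ:ℂ))) := by
        intro L hL
        rw [Finset.mem_range] at hL
        simp only [GG]
        rw [if_pos (by omega : L ≤ n), hTT L]
      rw [Finset.sum_congr rfl e1, ← Finset.mul_sum, cheb_sum n θ]
      have hcx : Complex.cos (θ:ℂ) = (x:ℂ) := by rw [← Complex.ofReal_cos, hxc]
      rw [hcx, mul_pow, show (2:ℂ)^(2*n) = 4^n by rw [pow_mul]; norm_num]
      have h4n : (4:ℂ)^n ≠ 0 := pow_ne_zero _ (by norm_num)
      field_simp
    rw [← h2]
    exact h1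
  -- summability of GG
  have hGnorm : Summable (fun p : ℕ×ℕ => ‖GG ν k x p‖) := by
    apply (summable_prod_of_nonneg (fun p => norm_nonneg _)).mpr
    constructor
    · intro n
      apply summable_of_ne_finset_zero (s := Finset.range (n+1))
      intro L hL
      rw [Finset.mem_range] at hL
      simp only [GG]
      rw [if_neg (by omega), norm_zero]
    · refine Summable.of_nonneg_of_le
        (f := fun n => 2 * ‖(2:ℂ)^(-ν) / Complex.Gamma (ν+1) * bb ν k n‖)
        (fun n => tsum_nonneg fun L => norm_nonneg _) (fun n => ?_) ?_
      · 
        have h0 : ∀ L ∉ Finset.range (n+1), ‖GG ν k x (n, L)‖ = 0 := by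
          intro L hL
          rw [Finset.mem_range] at hL
          simp only [GG]
          rw [if_neg (by omega), norm_zero]
        rw [tsum_eq_sum h0]
        have hterm : ∀ L ∈ Finset.range (n+1), ‖GG ν k x (n, L)‖
            ≤ ‖(2:ℂ)^(-ν) / Complex.Gamma (ν+1) * bb ν k n‖ / 4^n
              * (2 * (((2*n).choose (n-L) : ℕ) : ℝ)) := by
          intro L hL
          rw [Finset.mem_range] at hL
          simp only [GG]
          rw [if_pos (by omega : L ≤ n)]
          rw [norm_mul, norm_mul, norm_mul, norm_div, norm_pow]
          have hn4 : ‖(4:ℂ)‖ = 4 := by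
            rw [show (4:ℂ) = ((4:ℝ):ℂ) by norm_num, Complex.norm_real]
            norm_num
          rw [hn4, Complex.norm_natCast]
          have h1 : ‖(2 - if L = 0 then 1 else 0 : ℂ)‖ ≤ 2 := by
            split_ifs <;> norm_num
          have h3 := hTTle L
          have hch : (0:ℝ) ≤ (((2*n).choose (n-L) : ℕ) : ℝ) := Nat.cast_nonneg _
          have hc0 : (0:ℝ) ≤ ‖(2:ℂ)^(-ν) / Complex.Gamma (ν+1) * bb ν k n‖ / 4^n := by
            positivity
          calc ‖(2:ℂ)^(-ν) / Complex.Gamma (ν+1) * bb ν k n‖ / 4^n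
                * (‖(2 - if L = 0 then 1 else 0 : ℂ)‖ * (((2*n).choose (n-L) : ℕ) : ℝ)
                  * ‖(((Polynomial.Chebyshev.T ℝ (2*(L:ℤ))).eval x : ℝ) : ℂ)‖)
              ≤ ‖(2:ℂ)^(-ν) / Complex.Gamma (ν+1) * bb ν k n‖ / 4^n
                * (2 * (((2*n).choose (n-L) : ℕ) : ℝ) * 1) := by
                apply mul_le_mul_of_nonneg_left _ hc0
                apply mul_le_mul _ h3 (norm_nonneg _) (by positivity)
                exact mul_le_mul_of_nonneg_right h1 hch
            _ = ‖(2:ℂ)^(-ν) / Complex.Gamma (ν+1) * bb ν k n‖ / 4^n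
                * (2 * (((2*n).choose (n-L) : ℕ) : ℝ)) := by ring
        calc ∑ L ∈ Finset.range (n+1), ‖GG ν k x (n, L)‖
            ≤ ∑ L ∈ Finset.range (n+1), (‖(2:ℂ)^(-ν) / Complex.Gamma (ν+1) * bb ν k n‖ / 4^n
              * (2 * (((2*n).choose (n-L) : ℕ) : ℝ))) := Finset.sum_le_sum hterm
          _ = ‖(2:ℂ)^(-ν) / Complex.Gamma (ν+1) * bb ν k n‖ / 4^n * 2
              * ∑ L ∈ Finset.range (n+1), (((2*n).choose (n-L) : ℕ) : ℝ) := by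
              rw [Finset.mul_sum]
              apply Finset.sum_congr rfl
              intro L _
              ring
          _ ≤ ‖(2:ℂ)^(-ν) / Complex.Gamma (ν+1) * bb ν k n‖ / 4^n * 2 * 4^n := by
              apply mul_le_mul_of_nonneg_left _ (by positivity)
              have hr := Finset.sum_range_reflect (fun j => (((2*n).choose j : ℕ) : ℝ)) (n+1)
              simp only [Nat.add_sub_cancel] at hr
              rw [hr]
              calc ∑ j ∈ Finset.range (n+1), (((2*n).choose j : ℕ) : ℝ)
                  ≤ ∑ j ∈ Finset.range (2*n+1), (((2*n).choose j : ℕ) : ℝ) := by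
                    apply Finset.sum_le_sum_of_subset_of_nonneg
                    · apply Finset.range_subset_range.mpr
                      omega
                    · intro _ _ _
                      exact Nat.cast_nonneg _
                _ = ((2:ℝ))^(2*n) := by
                    rw [← Nat.cast_sum]
                    rw [Nat.sum_range_choose (2*n)]
                    push_cast
                    ring
                _ = 4^n := by
                    rw [pow_mul]
                    norm_num
          _ = 2 * ‖(2:ℂ)^(-ν) / Complex.Gamma (ν+1) * bb ν k n‖ := by
              have h4n : (4:ℝ)^n ≠ 0 := by positivity
              rw [div_mul_eq_mul_div, div_mul_eq_mul_div, div_eq_iff h4n]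
              ring
      · apply Summable.congr ((bb_norm_summable ν k hν').mul_left
          (2 * ‖(2:ℂ)^(-ν) / Complex.Gamma (ν+1)‖))
        intro n
        rw [norm_mul]
        ring
  have hGsum : Summable (GG ν k x) := hGnorm.of_norm
  -- the RHS sum
  have hxle : ‖(x:ℂ)‖ ≤ 1 := by
    rw [Complex.norm_real, Real.norm_eq_abs]
    exact abs_le.mpr ⟨hx1, hx2⟩
  have hsx : Summable (fun n => bb ν k n * (x:ℂ)^(2*n)) := by
    apply Summable.of_norm
    apply Summable.of_nonneg_of_le (fun n => norm_nonneg _) _ (bb_norm_summable ν k hν')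
    intro n
    rw [norm_mul, norm_pow]
    exact mul_le_of_le_one_right (norm_nonneg _) (pow_le_one₀ (norm_nonneg _) hxle)
  have hpFq : pFq [] [ν+1] (-(k:ℂ)^2 * (x:ℂ)^2 / 4) = ∑' n, (bb ν k n * (x:ℂ)^(2*n)) := by
    simp only [pFq]
    apply tsum_congr
    intro n
    simp only [List.map_nil, List.prod_nil, List.map_cons, List.prod_cons, mul_one, bb]
    rw [show (-(k:ℂ)^2 * (x:ℂ)^2/4) = (-(k:ℂ)^2/4) * (x:ℂ)^2 by ring, mul_pow, ← pow_mul]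
    ring
  have hRHS : HasSum (fun n => (2:ℂ)^(-ν) / Complex.Gamma (ν+1) * bb ν k n * (x:ℂ)^(2*n))
      ((2:ℂ)^(-ν) / Complex.Gamma (ν+1) * pFq [] [ν+1] (-(k:ℂ)^2 * (x:ℂ)^2 / 4)) := by
    rw [hpFq]
    have h1 := hsx.hasSum.mul_left ((2:ℂ)^(-ν) / Complex.Gamma (ν+1))
    simp only [← mul_assoc] at h1
    exact h1
  -- total sum of GG
  have hGS : HasSum (GG ν k x)
      ((2:ℂ)^(-ν) / Complex.Gamma (ν+1) * pFq [] [ν+1] (-(k:ℂ)^2 * (x:ℂ)^2 / 4)) := by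
    have h1 := hGsum.hasSum
    have h2 := h1.prod_fiberwise hfibn
    rwa [h2.unique hRHS] at h1
  have hswap : HasSum (GG ν k x ∘ (Equiv.prodComm ℕ ℕ))
      ((2:ℂ)^(-ν) / Complex.Gamma (ν+1) * pFq [] [ν+1] (-(k:ℂ)^2 * (x:ℂ)^2 / 4)) :=
    (Equiv.prodComm ℕ ℕ).hasSum_iff.mpr hGS
  refine HasSum.prod_fiberwise hswap (fun L => ?_)
  show HasSum (fun n => GG ν k x (n, L)) _
  have hinj : Function.Injective (fun m : ℕ => L + m) := fun a b h => Nat.add_left_cancel h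
  have hvan : ∀ n ∉ Set.range (fun m : ℕ => L + m), GG ν k x (n, L) = 0 := by
    intro n hn
    have hnL : ¬ (L ≤ n) := by
      intro h
      exact hn ⟨n - L, by show L + (n - L) = n; omega⟩
    simp only [GG]
    rw [if_neg hnL]
  apply (Function.Injective.hasSum_iff hinj hvan).mp
  have hts : Summable (tt ν k L) := (tt_norm_summable ν k L hν').of_norm
  have hpL : pFq [(L:ℂ)+1/2] [(L:ℂ)+ν+1, 2*(L:ℂ)+1] (-(k:ℂ)^2/4) = ∑' m, tt ν k L m := by
    simp only [pFq]
    apply tsum_congr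
    intro m
    simp only [List.map_cons, List.map_nil, List.prod_cons, List.prod_nil, mul_one, tt]
  have hc24 : (2:ℂ)^(-(4:ℂ)*(L:ℂ) - ν) = (2:ℂ)^(-ν) / 2^(4*L) := by
    have h1 : -(4:ℂ)*(L:ℂ) - ν = -ν + -((4*L : ℕ) : ℂ) := by push_cast; ring
    rw [h1, Complex.cpow_add _ _ (by norm_num : (2:ℂ) ≠ 0), Complex.cpow_neg, Complex.cpow_neg,
      Complex.cpow_natCast, div_eq_mul_inv]
  have hfun : ∀ m : ℕ, GG ν k x (L + m, L)
      = ((-1:ℂ)^L * (k:ℂ)^(2*L) * (2:ℂ)^(-(4:ℂ)*L - ν) * (2 - if L = 0 then 1 else 0 : ℂ)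
          / ((L.factorial:ℂ) * Complex.Gamma ((L:ℂ)+ν+1))
          * (((Polynomial.Chebyshev.T ℝ (2*(L:ℤ))).eval x : ℝ) : ℂ)) * tt ν k L m := by
    intro m
    simp only [GG]
    rw [if_pos (Nat.le_add_right L m), show (L + m) - L = m from by omega, hc24]
    simp only [bb, tt]
    linear_combination ((2 - if L = 0 then 1 else 0 : ℂ)
      * (((Polynomial.Chebyshev.T ℝ (2*(L:ℤ))).eval x : ℝ) : ℂ) * (2:ℂ)^(-ν))
      * term_id ν hν' k L m
  have h2 := hts.hasSum.mul_left
    ((-1:ℂ)^L * (k:ℂ)^(2*L) * (2:ℂ)^(-(4:ℂ)*L - ν) * (2 - if L = 0 then 1 else 0 : ℂ)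
      / ((L.factorial:ℂ) * Complex.Gamma ((L:ℂ)+ν+1))
      * (((Polynomial.Chebyshev.T ℝ (2*(L:ℤ))).eval x : ℝ) : ℂ))
  rw [show (fun m => ((-1:ℂ)^L * (k:ℂ)^(2*L) * (2:ℂ)^(-(4:ℂ)*L - ν)
      * (2 - if L = 0 then 1 else 0 : ℂ)
      / ((L.factorial:ℂ) * Complex.Gamma ((L:ℂ)+ν+1))
      * (((Polynomial.Chebyshev.T ℝ (2*(L:ℤ))).eval x : ℝ) : ℂ)) * tt ν k L m)
    = (fun m => GG ν k x (L + m, L)) from funext fun m => (hfun m).symm] at h2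
  have hval : ((-1:ℂ)^L * (k:ℂ)^(2*L) * (2:ℂ)^(-(4:ℂ)*L - ν) * (2 - if L = 0 then 1 else 0 : ℂ)
        / ((L.factorial:ℂ) * Complex.Gamma ((L:ℂ)+ν+1))
        * pFq [(L:ℂ)+1/2] [(L:ℂ)+ν+1, 2*(L:ℂ)+1] (-(k:ℂ)^2/4))
        * (((Polynomial.Chebyshev.T ℝ (2*(L:ℤ))).eval x : ℝ) : ℂ)
      = ((-1:ℂ)^L * (k:ℂ)^(2*L) * (2:ℂ)^(-(4:ℂ)*L - ν) * (2 - if L = 0 then 1 else 0 : ℂ)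
        / ((L.factorial:ℂ) * Complex.Gamma ((L:ℂ)+ν+1))
        * (((Polynomial.Chebyshev.T ℝ (2*(L:ℤ))).eval x : ℝ) : ℂ)) * ∑' m, tt ν k L m := by
    rw [hpL]
    ring
  rw [hval]
  exact h2
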